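/- Let u be twice continuously differentiable on [X_{j-1}, X_{j+1}] and suppose u(X_{j±1}) = u(X_j) (the γ = 0 coupling condition). If u'' = λ u on the element with λ a constant and u not identically constant, and additionally u is C¹ across X_j, then λ ≤ -π²/h², where h = X_{j+1} - X_j = X_j - X_{j-1}. In particular the only eigenvalue of the element Laplacian with eigenvalue > -π²/h² under these conditions is λ = 0, attained by constant functions. -/

import Mathlib

open Real Set

/-!
Wronskians of solutions of `y'' = λ y` are constant, so every solution is
`u(X_j) c(x - X_j) + u'(X_j) s(x - X_j)` for the fundamental pair `c, s` normalised at `0`.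
Since `c` is even and `s` is odd, `u(X_j - h) = u(X_j + h)` forces `u'(X_j) s(h) = 0`, and then
`u(X_j ± h) = u(X_j)` gives `u(X_j) (c(h) - 1) = 0`. For `λ = -ω² ∈ (-π²/h², 0)` we have
`0 < ωh < π`, so `s(h) = sin(ωh)/ω ≠ 0` and `c(h) = cos(ωh) ≠ 1`; for `λ = ω² > 0` the same holds
for `sinh, cosh`. Hence `u ≡ 0`. For `λ = 0` the solution is affine with zero slope.
-/

def SolvesEigenODEOn (lam : ℝ) (y y' : ℝ → ℝ) (S : Set ℝ) : Prop :=
  ∀ x ∈ S, HasDerivAt y (y' x) x ∧ HasDerivAt y' (lam * y x) x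

namespace SolvesEigenODEOn

variable {lam : ℝ} {u u' c c' s s' y y' z z' : ℝ → ℝ} {S : Set ℝ}

theorem mono {T : Set ℝ} (hy : SolvesEigenODEOn lam y y' S) (hTS : T ⊆ S) :
    SolvesEigenODEOn lam y y' T :=
  fun x hx => hy x (hTS hx)

theorem continuous (hy : SolvesEigenODEOn lam y y' univ) : Continuous y :=
  continuous_iff_continuousAt.2 fun x => (hy x trivial).1.continuousAt

theorem comp_sub_const (hy : SolvesEigenODEOn lam y y' univ) (a : ℝ) :
    SolvesEigenODEOn lam (fun x => y (x - a)) (fun x => y' (x - a)) univ :=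
  fun x _ => ⟨(hy (x - a) trivial).1.comp_sub_const x a, (hy (x - a) trivial).2.comp_sub_const x a⟩

theorem hasDerivAt_wronskian (hy : SolvesEigenODEOn lam y y' S)
    (hz : SolvesEigenODEOn lam z z' S) {x : ℝ} (hx : x ∈ S) :
    HasDerivAt (fun t => y t * z' t - y' t * z t) 0 x := by
  obtain ⟨hy₁, hy₂⟩ := hy x hx
  obtain ⟨hz₁, hz₂⟩ := hz x hx
  exact ((hy₁.mul hz₂).sub (hy₂.mul hz₁)).congr_deriv (by ring)

theorem wronskian_eq (hS : IsOpen S) (hS' : IsPreconnected S) (hy : SolvesEigenODEOn lam y y' S)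
    (hz : SolvesEigenODEOn lam z z' S) {x x₀ : ℝ} (hx : x ∈ S) (hx₀ : x₀ ∈ S) :
    y x * z' x - y' x * z x = y x₀ * z' x₀ - y' x₀ * z x₀ :=
  hS.is_const_of_deriv_eq_zero (f := fun t => y t * z' t - y' t * z t) hS'
    (fun _ ht => (hasDerivAt_wronskian hy hz ht).differentiableAt.differentiableWithinAt)
    (fun _ ht => (hasDerivAt_wronskian hy hz ht).deriv) hx hx₀

theorem eqOn_of_fundamental (hS : IsOpen S) (hS' : IsPreconnected S)
    (hu : SolvesEigenODEOn lam u u' S) (hc : SolvesEigenODEOn lam c c' S)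
    (hs : SolvesEigenODEOn lam s s' S) {x₀ : ℝ} (hx₀ : x₀ ∈ S)
    (hc₀ : c x₀ = 1) (hc'₀ : c' x₀ = 0) (hs₀ : s x₀ = 0) (hs'₀ : s' x₀ = 1) :
    EqOn u (fun x => u x₀ * c x + u' x₀ * s x) S := by
  intro x hx
  have hcs := wronskian_eq hS hS' hc hs hx hx₀
  have huc := wronskian_eq hS hS' hu hc hx hx₀
  have hus := wronskian_eq hS hS' hu hs hx hx₀
  simp only [hc₀, hc'₀, hs₀, hs'₀] at hcs huc hus
  show u x = u x₀ * c x + u' x₀ * s x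
  -- `u W(c, s) = W(u, s) c - W(u, c) s` holds pointwise
  linear_combination (-u x) * hcs + c x * hus - s x * huc

theorem eqOn_Icc_of_fundamental {a h : ℝ} (hh : 0 < h)
    (hu : SolvesEigenODEOn lam u u' (Ioo (a - h) (a + h)))
    (hcont : ContinuousOn u (Icc (a - h) (a + h)))
    (hc : SolvesEigenODEOn lam c c' univ) (hs : SolvesEigenODEOn lam s s' univ)
    (hc₀ : c 0 = 1) (hc'₀ : c' 0 = 0) (hs₀ : s 0 = 0) (hs'₀ : s' 0 = 1) :
    EqOn u (fun x => u a * c (x - a) + u' a * s (x - a)) (Icc (a - h) (a + h)) := by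
  have hrep := eqOn_of_fundamental isOpen_Ioo isPreconnected_Ioo hu
    ((hc.comp_sub_const a).mono (subset_univ _)) ((hs.comp_sub_const a).mono (subset_univ _))
    (x₀ := a) ⟨by linarith, by linarith⟩
    (by simpa using hc₀) (by simpa using hc'₀) (by simpa using hs₀) (by simpa using hs'₀)
  have hcont_c := hc.continuous
  have hcont_s := hs.continuous
  exact hrep.of_subset_closure hcont (by fun_prop) Ioo_subset_Icc_self
    (closure_Ioo (by linarith)).ge

end SolvesEigenODEOn

theorem solvesEigenODEOn_of_contDiffOn {lam : ℝ} {u : ℝ → ℝ} {S : Set ℝ} (hS : IsOpen S)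
    (hu : ContDiffOn ℝ 2 u S) (heig : ∀ x ∈ S, deriv (deriv u) x = lam * u x) :
    SolvesEigenODEOn lam u (deriv u) S := by
  intro x hx
  have hdu : ContDiffOn ℝ 1 (deriv u) S := hu.deriv_of_isOpen hS (by norm_num)
  refine ⟨((hu.differentiableOn (by norm_num)).differentiableAt (hS.mem_nhds hx)).hasDerivAt, ?_⟩
  rw [← heig x hx]
  exact ((hdu.differentiableOn one_ne_zero).differentiableAt (hS.mem_nhds hx)).hasDerivAt

theorem solvesEigenODEOn_cos (ω : ℝ) :
    SolvesEigenODEOn (-ω ^ 2) (fun x => cos (ω * x)) (fun x => -(ω * sin (ω * x))) univ := by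
  intro x _
  have hωx := (hasDerivAt_id' x).const_mul ω
  exact ⟨((hasDerivAt_cos _).comp x hωx).congr_deriv (by ring),
    (((hasDerivAt_sin _).comp x hωx).const_mul ω).neg.congr_deriv (by ring)⟩

theorem solvesEigenODEOn_sin_div {ω : ℝ} (hω : ω ≠ 0) :
    SolvesEigenODEOn (-ω ^ 2) (fun x => sin (ω * x) / ω) (fun x => cos (ω * x)) univ := by
  intro x _
  have hωx := (hasDerivAt_id' x).const_mul ω
  exact ⟨(((hasDerivAt_sin _).comp x hωx).div_const ω).congr_deriv (by field_simp),
    ((hasDerivAt_cos _).comp x hωx).congr_deriv (by field_simp)⟩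

theorem solvesEigenODEOn_cosh (ω : ℝ) :
    SolvesEigenODEOn (ω ^ 2) (fun x => cosh (ω * x)) (fun x => ω * sinh (ω * x)) univ := by
  intro x _
  have hωx := (hasDerivAt_id' x).const_mul ω
  exact ⟨((hasDerivAt_cosh _).comp x hωx).congr_deriv (by ring),
    (((hasDerivAt_sinh _).comp x hωx).const_mul ω).congr_deriv (by ring)⟩

theorem solvesEigenODEOn_sinh_div {ω : ℝ} (hω : ω ≠ 0) :
    SolvesEigenODEOn (ω ^ 2) (fun x => sinh (ω * x) / ω) (fun x => cosh (ω * x)) univ := by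
  intro x _
  have hωx := (hasDerivAt_id' x).const_mul ω
  exact ⟨(((hasDerivAt_sinh _).comp x hωx).div_const ω).congr_deriv (by field_simp),
    ((hasDerivAt_cosh _).comp x hωx).congr_deriv (by field_simp)⟩

section SymmetricInterval

variable {lam a h : ℝ} {u u' : ℝ → ℝ}

theorem eq_center_of_even_odd {c s : ℝ → ℝ} {B : ℝ} (hh : 0 ≤ h)
    (hrep : EqOn u (fun x => u a * c (x - a) + B * s (x - a)) (Icc (a - h) (a + h)))
    (hbc₁ : u (a - h) = u a) (hbc₂ : u (a + h) = u a)
    (hc_even : c (-h) = c h) (hs_odd : s (-h) = -s h) (hsh : s h ≠ 0) (hch : c h ≠ 1) :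
    ∀ x ∈ Icc (a - h) (a + h), u x = u a := by
  have hl := hrep (left_mem_Icc.2 (by linarith))
  have hr := hrep (right_mem_Icc.2 (by linarith))
  simp only [sub_sub_cancel_left, add_sub_cancel_left, hc_even, hs_odd, hbc₁, hbc₂] at hl hr
  have hB : B = 0 :=
    (mul_eq_zero.1 (by linear_combination (hl - hr) / 2 : B * s h = 0)).resolve_right hsh
  have hua : u a = 0 :=
    (mul_eq_zero.1 (by linear_combination -hr - s h * hB : u a * (c h - 1) = 0)
      ).resolve_right (sub_ne_zero.2 hch)
  intro x hx
  rw [hrep hx, hB, hua]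
  ring

theorem eq_center_of_neg (hh : 0 < h) (hu : SolvesEigenODEOn lam u u' (Ioo (a - h) (a + h)))
    (hcont : ContinuousOn u (Icc (a - h) (a + h))) (hbc₁ : u (a - h) = u a)
    (hbc₂ : u (a + h) = u a) (hgap : -(π ^ 2 / h ^ 2) < lam) (hneg : lam < 0) :
    ∀ x ∈ Icc (a - h) (a + h), u x = u a := by
  obtain ⟨ω, hω, rfl⟩ : ∃ ω, 0 < ω ∧ lam = -ω ^ 2 :=
    ⟨√(-lam), sqrt_pos.2 (neg_pos.2 hneg), by rw [sq_sqrt (by linarith)]; ring⟩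
  have hωh : ω * h < π := by
    have : (ω * h) ^ 2 < π ^ 2 := by
      rw [mul_pow, ← lt_div_iff₀ (by positivity)]
      linarith
    exact lt_of_pow_lt_pow_left₀ 2 pi_pos.le this
  have hωh₀ : 0 < ω * h := by positivity
  refine eq_center_of_even_odd hh.le
    (SolvesEigenODEOn.eqOn_Icc_of_fundamental hh hu hcont (solvesEigenODEOn_cos ω)
      (solvesEigenODEOn_sin_div hω.ne') (by simp) (by simp) (by simp) (by simp))
    hbc₁ hbc₂ (by simp) (by simp [neg_div]) ?_ ?_
  · exact (div_pos (sin_pos_of_pos_of_lt_pi hωh₀ hωh) hω).ne'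
  · simpa using (cos_lt_cos_of_nonneg_of_le_pi le_rfl hωh.le hωh₀).ne

theorem eq_center_of_pos (hh : 0 < h) (hu : SolvesEigenODEOn lam u u' (Ioo (a - h) (a + h)))
    (hcont : ContinuousOn u (Icc (a - h) (a + h))) (hbc₁ : u (a - h) = u a)
    (hbc₂ : u (a + h) = u a) (hpos : 0 < lam) :
    ∀ x ∈ Icc (a - h) (a + h), u x = u a := by
  obtain ⟨ω, hω, rfl⟩ : ∃ ω, 0 < ω ∧ lam = ω ^ 2 :=
    ⟨√lam, sqrt_pos.2 hpos, (sq_sqrt hpos.le).symm⟩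
  have hωh₀ : 0 < ω * h := by positivity
  refine eq_center_of_even_odd hh.le
    (SolvesEigenODEOn.eqOn_Icc_of_fundamental hh hu hcont (solvesEigenODEOn_cosh ω)
      (solvesEigenODEOn_sinh_div hω.ne') (by simp) (by simp) (by simp) (by simp))
    hbc₁ hbc₂ (by simp) (by simp [neg_div]) ?_ ?_
  · exact (div_pos (sinh_pos_iff.2 hωh₀) hω).ne'
  · exact (one_lt_cosh.2 hωh₀.ne').ne'

theorem eq_center_of_zero (hh : 0 < h) (hu : SolvesEigenODEOn 0 u u' (Ioo (a - h) (a + h)))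
    (hcont : ContinuousOn u (Icc (a - h) (a + h))) (hbc₁ : u (a - h) = u a) :
    ∀ x ∈ Icc (a - h) (a + h), u x = u a := by
  have hrep := SolvesEigenODEOn.eqOn_Icc_of_fundamental hh hu hcont (c := fun _ => 1)
    (c' := fun _ => 0) (s := id) (s' := fun _ => 1)
    (fun x _ => ⟨hasDerivAt_const x 1, by simpa using hasDerivAt_const x (0 : ℝ)⟩)
    (fun x _ => ⟨hasDerivAt_id x, by simpa using hasDerivAt_const x (1 : ℝ)⟩) rfl rfl rfl rfl
  have hslope : u' a = 0 := by
    have hl := hrep (left_mem_Icc.2 (by linarith))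
    simp only [hbc₁, id, sub_sub_cancel_left] at hl
    exact (mul_eq_zero.1 (by linear_combination hl : u' a * h = 0)).resolve_right hh.ne'
  intro x hx
  rw [hrep hx, hslope]
  ring

end SymmetricInterval

theorem element_spectral_gap_general (h Xj lam : ℝ) (hh : 0 < h) (u : ℝ → ℝ)
    (hreg : ContDiffOn ℝ 2 u (Icc (Xj - h) (Xj + h)))
    (hbc1 : u (Xj - h) = u Xj) (hbc2 : u (Xj + h) = u Xj)
    (heig : ∀ x ∈ Icc (Xj - h) (Xj + h), deriv (deriv u) x = lam * u x)
    (hnonconst : ¬ ∀ x ∈ Icc (Xj - h) (Xj + h), u x = u Xj) :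
    lam ≤ -(π ^ 2 / h ^ 2) := by
  by_contra! hgap
  apply hnonconst
  have hu : SolvesEigenODEOn lam u (deriv u) (Ioo (Xj - h) (Xj + h)) :=
    solvesEigenODEOn_of_contDiffOn isOpen_Ioo (hreg.mono Ioo_subset_Icc_self)
      fun x hx => heig x (Ioo_subset_Icc_self hx)
  rcases lt_trichotomy lam 0 with hneg | rfl | hpos
  · exact eq_center_of_neg hh hu hreg.continuousOn hbc1 hbc2 hgap hneg
  · exact eq_center_of_zero hh hu hreg.continuousOn hbc1
  · exact eq_center_of_pos hh hu hreg.continuousOn hbc1 hbc2 hpos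

/-- Let `u` be twice continuously differentiable on `[X_j - h, X_j + h]` with
`u(X_j ± h) = u(X_j)` (the `γ = 0` coupling condition), `C¹` across `X_j`, and
suppose `u'' = λ u` on the element with `u` not identically constant. Then
`λ ≤ -π²/h²`. -/
theorem element_spectral_gap (h Xj lam : ℝ) (hh : 0 < h) (u : ℝ → ℝ)
    (hreg : ContDiffOn ℝ 2 u (Icc (Xj - h) (Xj + h)))
    (hC1 : ContinuousAt (deriv u) Xj)
    (hbc1 : u (Xj - h) = u Xj) (hbc2 : u (Xj + h) = u Xj)
    (heig : ∀ x ∈ Icc (Xj - h) (Xj + h), deriv (deriv u) x = lam * u x)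
    (hnonconst : ¬ ∀ x ∈ Icc (Xj - h) (Xj + h), u x = u Xj) :
    lam ≤ -(π ^ 2 / h ^ 2) :=
  element_spectral_gap_general h Xj lam hh u hreg hbc1 hbc2 heig hnonconst
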